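/- The induction step for parallel smoothing: in a hidden Markov model, ∫ p(x_k | y_{1:k+l-1}, x_{k+l}) p(x_{k+l} | y_{1:k+l}, x_{k+l+1}) dx_{k+l} = p(x_k | y_{1:k+l}, x_{k+l+1}). -/

import Mathlib

open Finset

/-- Unnormalized forward (filtering) quantity of a discrete hidden Markov model
with fixed observations: `hmmAlpha init trans like k x = p(x_k = x, y_{1:k})`,
where `trans k z x = p(x_k = x ∣ x_{k-1} = z)` and
`like k x = p(y_k ∣ x_k = x)` for the observed data `y`. -/
def hmmAlpha {S : Type*} [Fintype S] (init : S → ℝ)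
    (trans : ℕ → S → S → ℝ) (like : ℕ → S → ℝ) : ℕ → S → ℝ
  | 0, x => init x
  | k + 1, x => (∑ w, hmmAlpha init trans like k w * trans (k + 1) w x) * like (k + 1) x

/-- Backward quantity: `hmmGamma trans like k l u v
= p(y_{k+1:k+l}, x_{k+l+1} = v ∣ x_k = u)`. -/
def hmmGamma {S : Type*} [Fintype S]
    (trans : ℕ → S → S → ℝ) (like : ℕ → S → ℝ) : ℕ → ℕ → S → S → ℝ
  | k, 0, u, v => trans (k + 1) u v
  | k, l + 1, u, v =>
      ∑ w, trans (k + 1) u w * like (k + 1) w * hmmGamma trans like (k + 1) l w v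

/-- Conditional density `hmmCond init trans like k m u v = p(x_k = u ∣ y_{1:m}, x_{m+1} = v)`
(for `k ≤ m`), given by two-sided normalization. -/
noncomputable def hmmCond {S : Type*} [Fintype S] (init : S → ℝ)
    (trans : ℕ → S → S → ℝ) (like : ℕ → S → ℝ) (k m : ℕ) (u v : S) : ℝ :=
  hmmAlpha init trans like k u * hmmGamma trans like k (m - k) u v /
    ∑ u', hmmAlpha init trans like k u' * hmmGamma trans like k (m - k) u' v

/-! Write `α = hmmAlpha`, `γ = hmmGamma` and `n = k + m`, `l = m + 1`. The normalizer of
`p(x_k ∣ y_{1:n}, x_{n+1} = w)` is the one-step prediction `∑_z α_n(z) trans(z, w)`, and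
`α_{n+1}(w)` is that prediction times `like(w)`. So the factor `α_{n+1}(w)` in the second term
of each summand cancels the normalizer of the first, and summing over `w` turns `γ_k^m` into
`γ_k^{m+1}` by the forward recursion for `γ`; the normalizers left on both sides are the same
prediction at time `n + 1`. -/

section HMM

variable {S : Type*} [Fintype S]
  (init : S → ℝ) (trans : ℕ → S → S → ℝ) (like : ℕ → S → ℝ)

lemma hmmAlpha_succ (n : ℕ) (w : S) :
    hmmAlpha init trans like (n + 1) w
      = (∑ z, hmmAlpha init trans like n z * trans (n + 1) z w) * like (n + 1) w :=
  rfl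

lemma sum_hmmAlpha_mul_hmmGamma (m k : ℕ) (v : S) :
    ∑ u, hmmAlpha init trans like k u * hmmGamma trans like k m u v
      = ∑ w, hmmAlpha init trans like (k + m) w * trans (k + m + 1) w v := by
  induction m generalizing k with
  | zero => rfl
  | succ m ih =>
    calc ∑ u, hmmAlpha init trans like k u * hmmGamma trans like k (m + 1) u v
        = ∑ w, hmmAlpha init trans like (k + 1) w * hmmGamma trans like (k + 1) m w v := by
          simp only [hmmGamma, hmmAlpha_succ, Finset.mul_sum, Finset.sum_mul]
          rw [Finset.sum_comm]
          exact Finset.sum_congr rfl fun _ _ => Finset.sum_congr rfl fun _ _ => by ring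
      _ = _ := by rw [ih, Nat.add_right_comm k 1 m, Nat.add_assoc k m 1]

lemma hmmGamma_succ_right (m k : ℕ) (u v : S) :
    hmmGamma trans like k (m + 1) u v
      = ∑ w, hmmGamma trans like k m u w * like (k + m + 1) w * trans (k + m + 2) w v := by
  induction m generalizing k u with
  | zero => rfl
  | succ m ih =>
    calc hmmGamma trans like k (m + 2) u v
        = ∑ w, trans (k + 1) u w * like (k + 1) w * hmmGamma trans like (k + 1) (m + 1) w v :=
          rfl
      _ = ∑ w', (∑ w, trans (k + 1) u w * like (k + 1) w * hmmGamma trans like (k + 1) m w w')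
            * like (k + 1 + m + 1) w' * trans (k + 1 + m + 2) w' v := by
          simp only [ih, Finset.mul_sum, Finset.sum_mul]
          rw [Finset.sum_comm]
          exact Finset.sum_congr rfl fun _ _ => Finset.sum_congr rfl fun _ _ => by ring
      _ = _ := by rw [Nat.add_right_comm k 1 m]; rfl

lemma hmmAlpha_nonneg (hinit : ∀ x, 0 ≤ init x) (htrans : ∀ n z x, 0 ≤ trans n z x)
    (hlike : ∀ n x, 0 ≤ like n x) (n : ℕ) (x : S) : 0 ≤ hmmAlpha init trans like n x := by
  induction n generalizing x with
  | zero => exact hinit x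
  | succ n ih =>
    rw [hmmAlpha_succ]
    exact mul_nonneg (Finset.sum_nonneg fun w _ => mul_nonneg (ih w) (htrans _ _ _)) (hlike _ _)

lemma hmmGamma_nonneg (htrans : ∀ n z x, 0 ≤ trans n z x) (hlike : ∀ n x, 0 ≤ like n x)
    (m k : ℕ) (u v : S) : 0 ≤ hmmGamma trans like k m u v := by
  induction m generalizing k u with
  | zero => exact htrans _ _ _
  | succ m ih =>
    exact Finset.sum_nonneg fun w _ =>
      mul_nonneg (mul_nonneg (htrans _ _ _) (hlike _ _)) (ih _ _)

lemma hmmCond_add (k m : ℕ) (u v : S) :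
    hmmCond init trans like k (k + m) u v
      = hmmAlpha init trans like k u * hmmGamma trans like k m u v /
          ∑ w, hmmAlpha init trans like (k + m) w * trans (k + m + 1) w v := by
  rw [hmmCond, Nat.add_sub_cancel_left, sum_hmmAlpha_mul_hmmGamma]

lemma hmmCond_self (n : ℕ) (w v : S) :
    hmmCond init trans like n n w v
      = hmmAlpha init trans like n w * trans (n + 1) w v /
          ∑ w', hmmAlpha init trans like n w' * trans (n + 1) w' v := by
  rw [hmmCond, Nat.sub_self]
  rfl

/-- Bayes' rule `p(x_k ∣ y_{1:n}, x_{n+1}) p(x_{n+1}, y_{1:n+1}) = p(x_k, x_{n+1}, y_{1:n+1})`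
for `n = k + m`. -/
lemma hmmCond_mul_hmmAlpha_succ (hinit : ∀ x, 0 ≤ init x)
    (htrans : ∀ n z x, 0 ≤ trans n z x) (hlike : ∀ n x, 0 ≤ like n x)
    (k m : ℕ) (u w : S) :
    hmmCond init trans like k (k + m) u w * hmmAlpha init trans like (k + m + 1) w
      = hmmAlpha init trans like k u * hmmGamma trans like k m u w * like (k + m + 1) w := by
  have hterm_nonneg : ∀ u',
      0 ≤ hmmAlpha init trans like k u' * hmmGamma trans like k m u' w := fun u' =>
    mul_nonneg (hmmAlpha_nonneg init trans like hinit htrans hlike k u')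
      (hmmGamma_nonneg trans like htrans hlike m k u' w)
  rw [hmmCond, Nat.add_sub_cancel_left, hmmAlpha_succ, ← sum_hmmAlpha_mul_hmmGamma,
    ← mul_assoc]
  congr 1
  refine div_mul_cancel_of_imp fun hzero => ?_
  exact (Finset.sum_eq_zero_iff_of_nonneg fun u' _ => hterm_nonneg u').1 hzero u
    (Finset.mem_univ u)

end HMM

theorem smoothing_induction_step_general {S : Type*} [Fintype S]
    (init : S → ℝ) (trans : ℕ → S → S → ℝ) (like : ℕ → S → ℝ)
    (hinit : ∀ x, 0 < init x)
    (htrans : ∀ n z x, 0 < trans n z x)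
    (hlike : ∀ n x, 0 < like n x)
    (k l : ℕ) (hl : 1 ≤ l) (u v : S) :
    ∑ w, hmmCond init trans like k (k + l - 1) u w *
        hmmCond init trans like (k + l) (k + l) w v
      = hmmCond init trans like k (k + l) u v := by
  obtain ⟨m, rfl⟩ : ∃ m, l = m + 1 := ⟨l - 1, by omega⟩
  have hbayes := hmmCond_mul_hmmAlpha_succ init trans like (fun x => (hinit x).le)
    (fun n z x => (htrans n z x).le) (fun n x => (hlike n x).le) k m u
  rw [hmmCond_add _ _ _ k (m + 1), ← Nat.add_assoc, Nat.add_sub_cancel, hmmGamma_succ_right,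
    Finset.mul_sum, Finset.sum_div]
  refine Finset.sum_congr rfl fun w _ => ?_
  rw [hmmCond_self, mul_div_assoc', ← mul_assoc, hbayes]
  ring

/-- **Induction step for parallel smoothing** (discrete hidden Markov model):
`∑_{x_{k+l}} p(x_k ∣ y_{1:k+l-1}, x_{k+l}) p(x_{k+l} ∣ y_{1:k+l}, x_{k+l+1})
 = p(x_k ∣ y_{1:k+l}, x_{k+l+1})`. -/
theorem smoothing_induction_step {S : Type*} [Fintype S] [Nonempty S]
    (init : S → ℝ) (trans : ℕ → S → S → ℝ) (like : ℕ → S → ℝ)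
    (hinit : ∀ x, 0 < init x)
    (htrans : ∀ n z x, 0 < trans n z x)
    (hlike : ∀ n x, 0 < like n x)
    (hinit1 : ∑ x, init x = 1)
    (htrans1 : ∀ n z, ∑ x, trans n z x = 1)
    (k l : ℕ) (hl : 1 ≤ l) (u v : S) :
    ∑ w, hmmCond init trans like k (k + l - 1) u w *
        hmmCond init trans like (k + l) (k + l) w v
      = hmmCond init trans like k (k + l) u v :=
  smoothing_induction_step_general init trans like hinit htrans hlike k l hl u v
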